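/- arXiv:2101.11982 — 8 statements merged into one kernel-verified Lean document; each statement's English description precedes it below -/
import Mathlib

section
/- For every i ≥ 2 one has dim_F L_{i+1} ≥ dim_F L_i; in particular, L_i ≠ 0 for all i ≥ 1 and L is infinite-dimensional over F. -/
open Submodule

/-- The `i`-th two-step centraliser `C_i = {a ∈ M_1 | ⁅a, u⁆ = 0 for all u ∈ M_i}`. -/
def twoStepCentraliser {E : Type*} [Field E] {M : Type*} [LieRing M] [LieAlgebra E M]
    (Mc : ℕ → Submodule E M) (i : ℕ) : Submodule E M where
  carrier := {a : M | a ∈ Mc 1 ∧ ∀ u ∈ Mc i, ⁅a, u⁆ = 0}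
  add_mem' := by
    rintro a b ⟨ha1, ha2⟩ ⟨hb1, hb2⟩
    exact ⟨add_mem ha1 hb1, fun u hu => by rw [add_lie, ha2 u hu, hb2 u hu, add_zero]⟩
  zero_mem' := ⟨zero_mem _, fun u _ => zero_lie u⟩
  smul_mem' := by
    rintro c a ⟨ha1, ha2⟩
    exact ⟨Submodule.smul_mem _ c ha1, fun u hu => by rw [smul_lie, ha2 u hu, smul_zero]⟩

/-- `Mc` is a grading of `M` as a graded Lie algebra of maximal class over `E`,
generated in degree 1. -/
structure IsMaximalClass (E : Type*) [Field E] (M : Type*) [LieRing M] [LieAlgebra E M]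
    (Mc : ℕ → Submodule E M) : Prop where
  zero_bot : Mc 0 = ⊥
  internal : DirectSum.IsInternal Mc
  lie_mem : ∀ i j : ℕ, ∀ x ∈ Mc i, ∀ y ∈ Mc j, ⁅x, y⁆ ∈ Mc (i + j)
  finrank_one : Module.finrank E ↥(Mc 1) = 2
  finrank_eq_one : ∀ i : ℕ, 2 ≤ i → Module.finrank E ↥(Mc i) = 1
  span_succ : ∀ i : ℕ, 1 ≤ i →
    Mc (i + 1) = Submodule.span E {z : M | ∃ v ∈ Mc i, ∃ a ∈ Mc 1, z = ⁅v, a⁆}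

/-- The homogeneous components of the Lie `F`-subalgebra generated by `X` and `Y` in
degree 1:  `L_1 = span_F {X, Y}` and `L_{i+1} = span_F {⁅v, a⁆ : v ∈ L_i, a ∈ L_1}`. -/
def Lcomp (F : Type*) [Field F] {M : Type*} [LieRing M] [Module F M]
    (X Y : M) : ℕ → Submodule F M
  | 0 => ⊥
  | 1 => Submodule.span F {X, Y}
  | (i + 2) => Submodule.span F
      {z : M | ∃ v ∈ Lcomp F X Y (i + 1), ∃ a ∈ Submodule.span F ({X, Y} : Set M), z = ⁅v, a⁆}

/-- `d_i = dim_F (C_i ∩ L_1)`. -/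
noncomputable def dSeq (E : Type*) [Field E] {M : Type*} [LieRing M] [LieAlgebra E M]
    (Mc : ℕ → Submodule E M) (F : Type*) [Field F] [Algebra F E] [LieAlgebra F M]
    [IsScalarTower F E M] (X Y : M) (i : ℕ) : ℕ :=
  Module.finrank F
    ↥(Submodule.restrictScalars F (twoStepCentraliser Mc i) ⊓ Lcomp F X Y 1)

section Aux

open Submodule

variable {E : Type*} [Field E] {M : Type*} [LieRing M] [LieAlgebra E M]
  {Mc : ℕ → Submodule E M}
  {F : Type*} [Field F] [Algebra F E] [LieAlgebra F M] [IsScalarTower F E M]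
  {X Y : M}

lemma aux_lcomp_le (hM : IsMaximalClass E M Mc) (hX : X ∈ Mc 1) (hY : Y ∈ Mc 1) :
    ∀ i : ℕ, 1 ≤ i → Lcomp F X Y i ≤ (Mc i).restrictScalars F := by
  have hpair : Submodule.span F {X, Y} ≤ (Mc 1).restrictScalars F := by
    rw [Submodule.span_le]
    rintro z (rfl | rfl) <;> simpa
  intro i hi
  induction i, hi using Nat.le_induction with
  | base => exact hpair
  | succ i hi IH =>
      obtain ⟨k, rfl⟩ := Nat.exists_eq_add_of_le' hi
      show Lcomp F X Y (k + 1 + 1) ≤ _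
      rw [show k + 1 + 1 = k + 2 from rfl]
      rw [show Lcomp F X Y (k + 2) = Submodule.span F
        {z : M | ∃ v ∈ Lcomp F X Y (k + 1), ∃ a ∈ Submodule.span F ({X, Y} : Set M), z = ⁅v, a⁆}
        from rfl, Submodule.span_le]
      rintro z ⟨v, hv, a, ha, rfl⟩
      exact hM.lie_mem (k + 1) 1 v (IH hv) a (hpair ha)

lemma aux_mc1 (hM : IsMaximalClass E M Mc) (hX : X ∈ Mc 1) (hY : Y ∈ Mc 1)
    (hXY : LinearIndependent E ![X, Y]) : Mc 1 = Submodule.span E {X, Y} := by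
  have h1 : Submodule.span E ({X, Y} : Set M) ≤ Mc 1 := by
    rw [Submodule.span_le]; rintro z (rfl | rfl) <;> assumption
  have : FiniteDimensional E (Mc 1) := .of_finrank_pos (by rw [hM.finrank_one]; norm_num)
  refine (Submodule.eq_of_le_of_finrank_le h1 ?_).symm
  have hr : Module.finrank E (Submodule.span E (Set.range ![X, Y])) = 2 := by
    rw [finrank_span_eq_card hXY]; simp
  rw [show ({X, Y} : Set M) = Set.range ![X, Y] by
    simp [Matrix.range_cons, Matrix.range_empty, Set.pair_comm], hr, hM.finrank_one]

lemma aux_span_mc (hM : IsMaximalClass E M Mc) {i : ℕ} (hi : 2 ≤ i) :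
    ∃ u ∈ Mc i, u ≠ 0 ∧ ∀ v ∈ Mc i, ∃ c : E, c • u = v := by
  obtain ⟨⟨u, hu⟩, hu0, hspan⟩ := finrank_eq_one_iff'.mp (hM.finrank_eq_one i hi)
  refine ⟨u, hu, by simpa using hu0, fun v hv => ?_⟩
  obtain ⟨c, hc⟩ := hspan ⟨v, hv⟩
  exact ⟨c, congrArg Subtype.val hc⟩

lemma aux_bracket (hM : IsMaximalClass E M Mc) (hX : X ∈ Mc 1) (hY : Y ∈ Mc 1)
    (hXY : LinearIndependent E ![X, Y]) {i : ℕ} (hi : 2 ≤ i) :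
    ∃ a ∈ ({X, Y} : Set M), ∀ v ∈ Mc i, v ≠ 0 → ⁅v, a⁆ ≠ 0 := by
  obtain ⟨u, hu, hu0, hspan⟩ := aux_span_mc hM hi
  have key : ⁅u, X⁆ ≠ 0 ∨ ⁅u, Y⁆ ≠ 0 := by
    by_contra h
    push_neg at h
    obtain ⟨h1, h2⟩ := h
    have hbot : Mc (i + 1) = ⊥ := by
      rw [hM.span_succ i (by omega)]
      refine le_bot_iff.mp (Submodule.span_le.mpr ?_)
      rintro z ⟨v, hv, a, ha, rfl⟩
      obtain ⟨c, rfl⟩ := hspan v hv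
      rw [aux_mc1 hM hX hY hXY] at ha
      obtain ⟨d, e, rfl⟩ := Submodule.mem_span_pair.mp ha
      simp [lie_add, lie_smul, smul_lie, h1, h2]
    have := hM.finrank_eq_one (i + 1) (by omega)
    rw [hbot, finrank_bot] at this
    omega
  have main : ∀ a : M, ⁅u, a⁆ ≠ 0 → ∀ v ∈ Mc i, v ≠ 0 → ⁅v, a⁆ ≠ 0 := by
    intro a ha v hv hv0
    obtain ⟨c, rfl⟩ := hspan v hv
    have hc : c ≠ 0 := by rintro rfl; simp at hv0
    rw [smul_lie]
    exact smul_ne_zero hc ha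
  rcases key with h | h
  · exact ⟨X, Set.mem_insert _ _, main X h⟩
  · exact ⟨Y, Set.mem_insert_of_mem _ rfl, main Y h⟩

lemma aux_xy (hM : IsMaximalClass E M Mc) (hX : X ∈ Mc 1) (hY : Y ∈ Mc 1)
    (hXY : LinearIndependent E ![X, Y]) : ⁅X, Y⁆ ≠ 0 := by
  intro h
  have hYX : ⁅Y, X⁆ = 0 := by rw [← neg_eq_zero, lie_skew, h]
  have hbot : Mc 2 = ⊥ := by
    rw [show (2 : ℕ) = 1 + 1 from rfl, hM.span_succ 1 le_rfl]
    refine le_bot_iff.mp (Submodule.span_le.mpr ?_)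
    rintro z ⟨v, hv, a, ha, rfl⟩
    rw [aux_mc1 hM hX hY hXY] at hv ha
    obtain ⟨c, d, rfl⟩ := Submodule.mem_span_pair.mp hv
    obtain ⟨e, f, rfl⟩ := Submodule.mem_span_pair.mp ha
    simp [lie_add, add_lie, lie_smul, smul_lie, h, hYX]
  have := hM.finrank_eq_one 2 le_rfl
  rw [hbot, finrank_bot] at this
  omega

lemma aux_nonbot (hM : IsMaximalClass E M Mc) (hX : X ∈ Mc 1) (hY : Y ∈ Mc 1)
    (hXY : LinearIndependent E ![X, Y]) :
    ∀ i : ℕ, 1 ≤ i → ∃ u ∈ Lcomp F X Y i, u ≠ 0 := by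
  have hXmem : X ∈ Submodule.span F ({X, Y} : Set M) :=
    Submodule.subset_span (Set.mem_insert _ _)
  have hYmem : Y ∈ Submodule.span F ({X, Y} : Set M) :=
    Submodule.subset_span (Set.mem_insert_of_mem _ rfl)
  intro i hi
  induction i, hi using Nat.le_induction with
  | base =>
      refine ⟨X, hXmem, ?_⟩
      have := hXY.ne_zero 0
      simpa using this
  | succ i hi IH =>
      obtain ⟨u, hu, hu0⟩ := IH
      match i, hi with
      | 1, _ =>
          refine ⟨⁅X, Y⁆, ?_, aux_xy hM hX hY hXY⟩
          exact Submodule.subset_span ⟨X, hXmem, Y, hYmem, rfl⟩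
      | (k + 2), _ =>
          obtain ⟨a, ha, hbr⟩ := aux_bracket hM hX hY hXY (i := k + 2) (by omega)
          refine ⟨⁅u, a⁆, ?_, ?_⟩
          · refine Submodule.subset_span ⟨u, hu, a, ?_, rfl⟩
            rcases ha with rfl | rfl
            exacts [hXmem, hYmem]
          · exact hbr u (aux_lcomp_le (F := F) hM hX hY (k + 2) (by omega) hu) hu0

end Aux
/-- `dim_F L_{i+1} ≥ dim_F L_i` for every `i ≥ 2`; in particular, `L_i ≠ 0`
for all `i ≥ 1` and the Lie `F`-subalgebra `L` generated by `X` and `Y` is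
infinite-dimensional over `F`. -/
theorem stmt_3 (E : Type*) [Field E] (M : Type*) [LieRing M] [LieAlgebra E M]
    (Mc : ℕ → Submodule E M) (hM : IsMaximalClass E M Mc)
    (F : Type*) [Field F] [Algebra F E] [LieAlgebra F M] [IsScalarTower F E M]
    (X Y : M) (hX : X ∈ Mc 1) (hY : Y ∈ Mc 1) (hXY : LinearIndependent E ![X, Y]) :
    (∀ i : ℕ, 2 ≤ i → Module.rank F ↥(Lcomp F X Y i) ≤ Module.rank F ↥(Lcomp F X Y (i + 1))) ∧
    (∀ i : ℕ, 1 ≤ i → Lcomp F X Y i ≠ ⊥) ∧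
    ¬ Module.Finite F ↥(LieSubalgebra.lieSpan F M {X, Y}) := by
  refine ⟨?_, ?_, ?_⟩
  · intro i hi
    obtain ⟨a, ha, hbr⟩ := aux_bracket hM hX hY hXY hi
    have haspan : a ∈ Submodule.span F ({X, Y} : Set M) := Submodule.subset_span ha
    let g : M →ₗ[F] M :=
      { toFun := fun v => ⁅v, a⁆
        map_add' := fun x y => add_lie x y a
        map_smul' := fun c x => smul_lie c x a }
    obtain ⟨k, rfl⟩ := Nat.exists_eq_add_of_le' hi
    have hmap : ∀ v ∈ Lcomp F X Y (k + 2), g v ∈ Lcomp F X Y (k + 2 + 1) := by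
      intro v hv
      show ⁅v, a⁆ ∈ Lcomp F X Y (k + 1 + 2)
      exact Submodule.subset_span ⟨v, hv, a, haspan, rfl⟩
    have hinj : Function.Injective (g.restrict hmap) := by
      rw [← LinearMap.ker_eq_bot, LinearMap.ker_eq_bot']
      rintro ⟨v, hv⟩ h0
      have h0' : ⁅v, a⁆ = 0 := congrArg Subtype.val h0
      have hvM : v ∈ Mc (k + 2) := aux_lcomp_le (F := F) hM hX hY (k + 2) (by omega) hv
      by_contra hne
      exact hbr v hvM (by simpa [Subtype.ext_iff] using hne) h0'
    exact LinearMap.rank_le_of_injective _ hinj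
  · intro i hi hbot
    obtain ⟨u, hu, hu0⟩ := aux_nonbot (F := F) hM hX hY hXY i hi
    rw [hbot, Submodule.mem_bot] at hu
    exact hu0 hu
  · intro hfin
    set S := LieSubalgebra.lieSpan F M ({X, Y} : Set M) with hS
    have hXS : X ∈ S := LieSubalgebra.subset_lieSpan (Set.mem_insert _ _)
    have hYS : Y ∈ S := LieSubalgebra.subset_lieSpan (Set.mem_insert_of_mem _ rfl)
    have hpairS : Submodule.span F ({X, Y} : Set M) ≤ S.toSubmodule := by
      rw [Submodule.span_le]; rintro z (rfl | rfl) <;> assumption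
    have hle : ∀ i : ℕ, 1 ≤ i → Lcomp F X Y i ≤ S.toSubmodule := by
      intro i hi
      induction i, hi using Nat.le_induction with
      | base => exact hpairS
      | succ i hi IH =>
          obtain ⟨k, rfl⟩ := Nat.exists_eq_add_of_le' hi
          show Lcomp F X Y (k + 1 + 1) ≤ _
          rw [show Lcomp F X Y (k + 1 + 1) = Submodule.span F
            {z : M | ∃ v ∈ Lcomp F X Y (k + 1), ∃ b ∈ Submodule.span F ({X, Y} : Set M),
              z = ⁅v, b⁆} from rfl, Submodule.span_le]
          rintro z ⟨v, hv, b, hb, rfl⟩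
          exact S.lie_mem (IH hv) (hpairS hb)
    choose u hu hu0 using fun n : ℕ => aux_nonbot (F := F) hM hX hY hXY (n + 1) (by omega)
    have hIndE : iSupIndep Mc := hM.internal.submodule_iSupIndep
    have hIndF : iSupIndep (fun n : ℕ => (Mc n).restrictScalars F) := by
      intro n
      rw [Submodule.disjoint_def]
      intro x hx1 hx2
      have hx2' : x ∈ (⨆ (j) (_ : j ≠ n), Mc j) := by
        have hsup : (⨆ (j) (_ : j ≠ n), (Mc j).restrictScalars F) ≤
            ((⨆ (j) (_ : j ≠ n), Mc j)).restrictScalars F := by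
          refine iSup₂_le fun j hj y hy => ?_
          simp only [Submodule.restrictScalars_mem] at hy ⊢
          exact Submodule.mem_iSup_of_mem j (Submodule.mem_iSup_of_mem hj hy)
        exact hsup hx2
      exact Submodule.disjoint_def.mp (hIndE n) x hx1 hx2'
    have hLI : LinearIndependent F u := by
      refine iSupIndep.linearIndependent _
        (hIndF.comp (f := fun n : ℕ => n + 1) (fun a b h => Nat.succ_injective h)) (fun n => ?_) hu0
      exact aux_lcomp_le (F := F) hM hX hY (n + 1) (by omega) (hu n)
    have hw : ∀ n, u n ∈ S.toSubmodule := fun n => hle (n + 1) (by omega) (hu n)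
    let w : ℕ → S.toSubmodule := fun n => ⟨u n, hw n⟩
    have hLIw : LinearIndependent F w :=
      LinearIndependent.of_comp (S.toSubmodule).subtype (by exact hLI)
    have hfin' : Module.Finite F S.toSubmodule := hfin
    have h1 : Cardinal.aleph0 ≤ Module.rank F S.toSubmodule := hLIw.aleph0_le_rank
    exact absurd h1 (Module.rank_lt_aleph0 F _).not_ge
end

section
/- For every i ≥ 2 one has d_i ≤ 1, where d_i = dim_F(C_i ∩ L_1). -/
open Submodule

/-- `d_i ≤ 1` for every `i ≥ 2`, where `d_i = dim_F (C_i ∩ L_1)`. -/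
theorem stmt_4 (E : Type*) [Field E] (M : Type*) [LieRing M] [LieAlgebra E M]
    (Mc : ℕ → Submodule E M) (hM : IsMaximalClass E M Mc)
    (F : Type*) [Field F] [Algebra F E] [LieAlgebra F M] [IsScalarTower F E M]
    (X Y : M) (hX : X ∈ Mc 1) (hY : Y ∈ Mc 1) (hXY : LinearIndependent E ![X, Y]) :
    ∀ i : ℕ, 2 ≤ i → dSeq E Mc F X Y i ≤ 1 := by
  intro i hi
  by_contra hcon
  push_neg at hcon
  unfold dSeq at hcon
  set S := Submodule.restrictScalars F (twoStepCentraliser Mc i) ⊓ Lcomp F X Y 1 with hSdef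
  -- X, Y are F-linearly independent
  have hliF : LinearIndependent F ![X, Y] :=
    hXY.restrict_scalars (by
      intro a b h
      exact (algebraMap F E).injective
        (by simpa [Algebra.algebraMap_eq_smul_one] using h))
  have hrange : Set.range ![X, Y] = ({X, Y} : Set M) := by
    simp [Matrix.range_cons, Matrix.range_empty, Set.pair_comm]
  have hL1eq : Lcomp F X Y 1 = Submodule.span F ({X, Y} : Set M) := rfl
  have hL1 : Module.finrank F (Lcomp F X Y 1) = 2 := by
    have := finrank_span_eq_card hliF
    rw [hrange] at this
    rw [hL1eq]
    simpa using this
  haveI : FiniteDimensional F (Lcomp F X Y 1) := .of_finrank_eq_succ hL1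
  have hSeq : S = Lcomp F X Y 1 :=
    Submodule.eq_of_le_of_finrank_le inf_le_right (by omega)
  -- hence X and Y belong to the two-step centraliser
  have hXmem : X ∈ twoStepCentraliser Mc i := by
    have : X ∈ S := hSeq ▸ (Submodule.subset_span (by simp) :
      X ∈ Submodule.span F ({X, Y} : Set M))
    exact this.1
  have hYmem : Y ∈ twoStepCentraliser Mc i := by
    have : Y ∈ S := hSeq ▸ (Submodule.subset_span (by simp) :
      Y ∈ Submodule.span F ({X, Y} : Set M))
    exact this.1
  -- span_E {X, Y} = Mc 1
  have hsubE : Submodule.span E ({X, Y} : Set M) ≤ Mc 1 := by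
    rw [Submodule.span_le]
    rintro z hz
    rcases hz with rfl | rfl
    · exact hX
    · exact hY
  have hfrE : Module.finrank E (Submodule.span E ({X, Y} : Set M)) = 2 := by
    have := finrank_span_eq_card hXY
    rw [hrange] at this
    simpa using this
  haveI : FiniteDimensional E (Mc 1) := .of_finrank_eq_succ hM.finrank_one
  have hMc1 : Submodule.span E ({X, Y} : Set M) = Mc 1 :=
    Submodule.eq_of_le_of_finrank_le hsubE (by rw [hM.finrank_one, hfrE])
  -- Mc 1 is contained in the two-step centraliser
  have hMc1C : Mc 1 ≤ twoStepCentraliser Mc i := by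
    rw [← hMc1, Submodule.span_le]
    rintro z hz
    rcases hz with rfl | rfl
    · exact hXmem
    · exact hYmem
  -- therefore Mc (i+1) = ⊥
  have hbot : Mc (i + 1) = ⊥ := by
    rw [hM.span_succ i (by omega)]
    rw [Submodule.span_eq_bot]
    rintro z ⟨v, hv, a, ha, rfl⟩
    have haC := hMc1C ha
    have : ⁅a, v⁆ = 0 := haC.2 v hv
    rw [← lie_skew, this, neg_zero]
  have h1 := hM.finrank_eq_one (i + 1) (by omega)
  rw [hbot] at h1
  simp at h1
end

section
/- Let i ≥ 2 and suppose d_i = 0, where d_i = dim_F(C_i ∩ L_1). Then for every nonzero l ∈ L_i, the F-subspace span_F{⁅l, a⁆ : a ∈ L_1} of M_{i+1} has dimension 2 over F. -/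
open Submodule

/-! Since `M_i` is one-dimensional over `E`, any `a ∈ L_1` with `⁅l, a⁆ = 0` centralises
`M_i = E • l`, so it lies in `C_i ∩ L_1 = 0`. Hence `ad l` is injective on `L_1`, and the span in
question, which is the image `ad l (L_1)`, has the `F`-dimension of `L_1`; that is `2` because
`X` and `Y` are `E`-independent, hence `F`-independent. -/

theorem LinearMap.finrank_map_of_disjoint_ker {R V W : Type*} [Ring R] [AddCommGroup V]
    [Module R V] [AddCommGroup W] [Module R W] (f : V →ₗ[R] W) {p : Submodule R V}
    (h : Disjoint p (LinearMap.ker f)) :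
    Module.finrank R (p.map f) = Module.finrank R p := by
  rw [← LinearMap.range_domRestrict]
  exact LinearMap.finrank_range_of_inj (injective_domRestrict_iff.mpr h)

theorem finrank_span_pair {K V : Type*} [DivisionRing K] [AddCommGroup V] [Module K V] {x y : V}
    (h : LinearIndependent K ![x, y]) : Module.finrank K (span K {x, y}) = 2 := by
  rw [← Matrix.range_cons_cons_empty x y ![], finrank_span_eq_card h, Fintype.card_fin]

theorem LieAlgebra.span_lie_eq_map_ad {R L : Type*} [CommRing R] [LieRing L] [LieAlgebra R L]
    (l : L) (p : Submodule R L) :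
    span R {z | ∃ a ∈ p, z = ⁅l, a⁆} = p.map (LieAlgebra.ad R L l) := by
  rw [← span_eq (p.map _), map_coe]
  congr 1
  ext z
  simp [eq_comm]

theorem mem_twoStepCentraliser_of_lie_eq_zero {E M : Type*} [Field E] [LieRing M]
    [LieAlgebra E M] {Mc : ℕ → Submodule E M} {i : ℕ} (hMi : Module.finrank E (Mc i) = 1)
    {l a : M} (hl : l ∈ Mc i) (hl0 : l ≠ 0) (ha : a ∈ Mc 1) (hla : ⁅l, a⁆ = 0) :
    a ∈ twoStepCentraliser Mc i := by
  refine ⟨ha, fun u hu => ?_⟩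
  obtain ⟨c, hc⟩ :=
    (finrank_eq_one_iff_of_nonzero' (⟨l, hl⟩ : Mc i) (by simpa using hl0)).mp hMi ⟨u, hu⟩
  rw [← show c • l = u from congrArg Subtype.val hc, lie_smul, ← lie_skew, hla, neg_zero,
    smul_zero]

instance Lcomp.finiteDimensional_one (F : Type*) [Field F] {M : Type*} [LieRing M] [Module F M]
    (X Y : M) : FiniteDimensional F (Lcomp F X Y 1) :=
  FiniteDimensional.span_of_finite F (Set.toFinite _)

theorem Lcomp_le_restrictScalars {E M : Type*} [Field E] [LieRing M] [LieAlgebra E M]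
    {Mc : ℕ → Submodule E M} (hM : IsMaximalClass E M Mc) (F : Type*) [Field F] [Algebra F E]
    [LieAlgebra F M] [IsScalarTower F E M] {X Y : M} (hX : X ∈ Mc 1) (hY : Y ∈ Mc 1) :
    ∀ i, Lcomp F X Y i ≤ (Mc i).restrictScalars F
  | 0 => bot_le
  | 1 => span_le.mpr <| by rintro z (rfl | rfl) <;> assumption
  | i + 2 => span_le.mpr <| by
      rintro z ⟨v, hv, a, ha, rfl⟩
      exact hM.lie_mem _ _ _ (Lcomp_le_restrictScalars hM F hX hY (i + 1) hv) _
        (Lcomp_le_restrictScalars hM F hX hY 1 ha)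

/-- if `i ≥ 2` and `d_i = 0`, then `dim_F ⁅l, L_1⁆ = 2` for every nonzero
`l ∈ L_i`. -/
theorem stmt_5 (E : Type*) [Field E] (M : Type*) [LieRing M] [LieAlgebra E M]
    (Mc : ℕ → Submodule E M) (hM : IsMaximalClass E M Mc)
    (F : Type*) [Field F] [Algebra F E] [LieAlgebra F M] [IsScalarTower F E M]
    (X Y : M) (hX : X ∈ Mc 1) (hY : Y ∈ Mc 1) (hXY : LinearIndependent E ![X, Y])
    (i : ℕ) (hi : 2 ≤ i) (hd : dSeq E Mc F X Y i = 0) :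
    ∀ l ∈ Lcomp F X Y i, l ≠ 0 →
      Module.finrank F
        ↥(Submodule.span F {z : M | ∃ a ∈ Lcomp F X Y 1, z = ⁅l, a⁆}) = 2 := by
  intro l hl hl0
  have hlM : l ∈ Mc i := Lcomp_le_restrictScalars hM F hX hY i hl
  have hC : (twoStepCentraliser Mc i).restrictScalars F ⊓ Lcomp F X Y 1 = ⊥ :=
    Submodule.finrank_eq_zero.mp hd
  have hdisj : Disjoint (Lcomp F X Y 1) (LinearMap.ker (LieAlgebra.ad F M l)) := by
    refine LinearMap.disjoint_ker.mpr fun a ha hla => ?_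
    have haC : a ∈ twoStepCentraliser Mc i :=
      mem_twoStepCentraliser_of_lie_eq_zero (hM.finrank_eq_one i hi) hlM hl0
        (Lcomp_le_restrictScalars hM F hX hY 1 ha) hla
    rw [← Submodule.mem_bot F, ← hC]
    exact ⟨haC, ha⟩
  rw [LieAlgebra.span_lie_eq_map_ad, LinearMap.finrank_map_of_disjoint_ker _ hdisj]
  exact finrank_span_pair (hXY.restrict_scalars' F)
end

section
/- Let i ≥ 2 and suppose d_i = 1, where d_i = dim_F(C_i ∩ L_1). Then for every nonzero l ∈ L_i, the F-subspace span_F{⁅l, a⁆ : a ∈ L_1} of M_{i+1} has dimension 1 over F. -/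
open Submodule

/-!
For nonzero `l ∈ L_i`, the `F`-linear map `ad l : L_1 → M` has image `⁅l, L_1⁆` and kernel
`C_i ∩ L_1`: as `M_i` is one-dimensional over `E` and spanned by `l`, an element of `M_1`
centralises `M_i` exactly when it commutes with `l`. Since `X, Y` are `E`-, hence
`F`-independent, rank–nullity gives `dim_F ⁅l, L_1⁆ = 2 - d_i = 1`.
-/

section RankNullity

variable {K V W : Type*} [Field K] [AddCommGroup V] [Module K V] [AddCommGroup W] [Module K W]

theorem Submodule.finrank_map_add_finrank_inf_ker (f : V →ₗ[K] W) (p : Submodule K V)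
    [FiniteDimensional K p] :
    Module.finrank K (p.map f) + Module.finrank K ↥(p ⊓ LinearMap.ker f) = Module.finrank K p := by
  have h := (f.domRestrict p).finrank_range_add_finrank_ker
  have hker : (LinearMap.ker f).comap p.subtype = (p ⊓ LinearMap.ker f).comap p.subtype := by
    rw [comap_inf, comap_subtype_self, top_inf_eq]
  rwa [LinearMap.range_domRestrict, LinearMap.ker_domRestrict, hker,
    (comapSubtypeEquivOfLe inf_le_left).finrank_eq] at h

theorem finrank_span_pair_of_linearIndependent {x y : V} (h : LinearIndependent K ![x, y]) :
    Module.finrank K (span K {x, y}) = 2 := by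
  have h2 := finrank_span_eq_card h
  rwa [Matrix.range_cons_cons_empty, Fintype.card_fin] at h2

end RankNullity

theorem Lcomp_le_of_lie_mem {F M : Type*} [Field F] [LieRing M] [Module F M] {X Y : M}
    {N : ℕ → Submodule F M} (hN : ∀ i, ∀ x ∈ N i, ∀ y ∈ N 1, ⁅x, y⁆ ∈ N (i + 1))
    (hX : X ∈ N 1) (hY : Y ∈ N 1) : ∀ i, Lcomp F X Y i ≤ N i
  | 0 => bot_le
  | 1 => span_le.2 (Set.insert_subset hX (Set.singleton_subset_iff.2 hY))
  | i + 2 => span_le.2 <| by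
      rintro _ ⟨v, hv, a, ha, rfl⟩
      exact hN (i + 1) v (Lcomp_le_of_lie_mem hN hX hY (i + 1) hv) a
        (Lcomp_le_of_lie_mem hN hX hY 1 ha)

section TwoStepCentraliser

variable {E M : Type*} [Field E] [LieRing M] [LieAlgebra E M] {Mc : ℕ → Submodule E M} {i : ℕ}

theorem mem_twoStepCentraliser {a : M} :
    a ∈ twoStepCentraliser Mc i ↔ a ∈ Mc 1 ∧ ∀ u ∈ Mc i, ⁅a, u⁆ = 0 :=
  Iff.rfl

theorem mem_twoStepCentraliser_iff_lie_eq_zero (hi : Module.finrank E (Mc i) = 1) {l a : M}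
    (hl : l ∈ Mc i) (hl0 : l ≠ 0) (ha : a ∈ Mc 1) :
    a ∈ twoStepCentraliser Mc i ↔ ⁅l, a⁆ = 0 := by
  rw [mem_twoStepCentraliser, eq_span_singleton_of_mem_of_finrank_eq_one hi hl hl0]
  constructor
  · rintro ⟨-, h⟩
    rw [← lie_skew, h l (mem_span_singleton_self l), neg_zero]
  · rintro h
    refine ⟨ha, fun u hu => ?_⟩
    obtain ⟨e, rfl⟩ := mem_span_singleton.1 hu
    rw [lie_smul, ← lie_skew, h, neg_zero, smul_zero]

end TwoStepCentraliser

/-- if `i ≥ 2` and `d_i = 1`, then `dim_F ⁅l, L_1⁆ = 1` for every nonzero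
`l ∈ L_i`. -/
theorem stmt_6 (E : Type*) [Field E] (M : Type*) [LieRing M] [LieAlgebra E M]
    (Mc : ℕ → Submodule E M) (hM : IsMaximalClass E M Mc)
    (F : Type*) [Field F] [Algebra F E] [LieAlgebra F M] [IsScalarTower F E M]
    (X Y : M) (hX : X ∈ Mc 1) (hY : Y ∈ Mc 1) (hXY : LinearIndependent E ![X, Y])
    (i : ℕ) (hi : 2 ≤ i) (hd : dSeq E Mc F X Y i = 1) :
    ∀ l ∈ Lcomp F X Y i, l ≠ 0 →
      Module.finrank F
        ↥(Submodule.span F {z : M | ∃ a ∈ Lcomp F X Y 1, z = ⁅l, a⁆}) = 1 := by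
  intro l hl hl0
  have hLMc : ∀ j, Lcomp F X Y j ≤ (Mc j).restrictScalars F :=
    Lcomp_le_of_lie_mem (fun j x hx y hy => hM.lie_mem j 1 x hx y hy) hX hY
  have himage : span F {z : M | ∃ a ∈ Lcomp F X Y 1, z = ⁅l, a⁆} =
      (Lcomp F X Y 1).map (LieAlgebra.ad F M l) := by
    rw [← (Lcomp F X Y 1).map (LieAlgebra.ad F M l) |>.span_eq, map_coe]
    congr 1
    ext z
    simp [eq_comm]
  have hker : (twoStepCentraliser Mc i).restrictScalars F ⊓ Lcomp F X Y 1 =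
      Lcomp F X Y 1 ⊓ LinearMap.ker (LieAlgebra.ad F M l) := by
    ext a
    simp only [mem_inf, Submodule.restrictScalars_mem, LinearMap.mem_ker, LieAlgebra.ad_apply]
    rw [and_comm]
    exact and_congr_right fun ha => mem_twoStepCentraliser_iff_lie_eq_zero
      (hM.finrank_eq_one i hi) (hLMc i hl) hl0 (hLMc 1 ha)
  have hL1 : Module.finrank F (Lcomp F X Y 1) = 2 :=
    finrank_span_pair_of_linearIndependent (hXY.restrict_scalars' F)
  have : FiniteDimensional F (Lcomp F X Y 1) := Module.finite_of_finrank_eq_succ hL1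
  have hrank := (Lcomp F X Y 1).finrank_map_add_finrank_inf_ker (LieAlgebra.ad F M l)
  rw [← himage, ← hker, hL1] at hrank
  unfold dSeq at hd
  omega
end

section
/- Assume [E : F] = 2 and d_i = 0 for every i ≥ 2, where d_i = dim_F(C_i ∩ L_1) (so L is thin and L_i = M_i as sets for every i ≥ 3). Let M³ = ⊕_{i ≥ 3} M_i, and let f : M³ → M³ be an F-linear map such that f(M_i) ⊆ M_i for every i ≥ 3 and f(⁅u, w⁆) = ⁅f(u), w⁆ for all u ∈ M³ and w ∈ L. Then there exists σ ∈ E such that f(u) = σ·u for all u ∈ M³. -/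
/-!
Since `d_i = 0`, for a nonzero `u ∈ M_i` (`i ≥ 2`) the `F`-linear map `s ↦ ⁅u, s⁆` is injective on
`L_1 = span_F {X, Y}`; as `dim_F L_1 = 2 = [E : F] = dim_F M_{i+1}`, it maps `L_1` onto `M_{i+1}`.
Hence, if `f u = σ u` for one nonzero `u ∈ M_i`, then `f ⁅u, s⁆ = ⁅f u, s⁆ = σ ⁅u, s⁆` gives
`f = σ` on all of `M_{i+1}`. Choosing `σ` with `f u₃ = σ u₃` for a nonzero `u₃ ∈ M_3`, this climbs
to every `M_i` with `i ≥ 4`. Back in degree 3, `⁅f v - σ v, X⁆ = 0` forces `f v = σ v`, because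
`X` does not lie in `C_3`.
-/

open Submodule

theorem Submodule.apply_eq_smul_of_eq_iSup {R S M ι : Type*} [Semiring R] [AddCommMonoid M]
    [Module R M] [DistribSMul S M] {N : ι → Submodule R M} {p : Submodule R M}
    (hp : p = ⨆ i, N i) (f : p →ₗ[R] p) (σ : S)
    (h : ∀ i, ∀ u : p, (u : M) ∈ N i → (f u : M) = σ • (u : M)) (u : p) :
    (f u : M) = σ • (u : M) := by
  subst hp
  refine iSup_induction' N (motive := fun x hx => (f ⟨x, hx⟩ : M) = σ • x)
    (fun i x hx => h i _ hx) ?_ ?_ u.2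
  · show (f 0 : M) = σ • 0
    rw [map_zero, coe_zero, smul_zero]
  · intro x y hx hy hfx hfy
    show (f (⟨x, hx⟩ + ⟨y, hy⟩) : M) = σ • (x + y)
    rw [map_add, coe_add, hfx, hfy, smul_add]

namespace IsMaximalClass

variable {E M : Type*} [Field E] [LieRing M] [LieAlgebra E M] {Mc : ℕ → Submodule E M}
  {i : ℕ}

theorem exists_ne_zero (hM : IsMaximalClass E M Mc) (hi : 2 ≤ i) : ∃ u ∈ Mc i, u ≠ 0 :=
  exists_mem_ne_zero_of_ne_bot fun h => by
    have := hM.finrank_eq_one i hi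
    rw [h, finrank_bot] at this
    exact zero_ne_one this

theorem exists_eq_smul (hM : IsMaximalClass E M Mc) (hi : 2 ≤ i) {u w : M} (hu : u ∈ Mc i)
    (hu0 : u ≠ 0) (hw : w ∈ Mc i) : ∃ c : E, w = c • u := by
  obtain ⟨c, hc⟩ := exists_smul_eq_of_finrank_eq_one (hM.finrank_eq_one i hi)
    (x := ⟨u, hu⟩) (by simpa using hu0) ⟨w, hw⟩
  exact ⟨c, congrArg Subtype.val hc.symm⟩

theorem mem_twoStepCentraliser (hM : IsMaximalClass E M Mc) (hi : 2 ≤ i) {u a : M}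
    (hu : u ∈ Mc i) (hu0 : u ≠ 0) (ha : a ∈ Mc 1) (h : ⁅u, a⁆ = 0) :
    a ∈ twoStepCentraliser Mc i := by
  refine ⟨ha, fun w hw => ?_⟩
  obtain ⟨c, rfl⟩ := hM.exists_eq_smul hi hu hu0 hw
  rw [lie_smul, ← lie_skew, h, neg_zero, smul_zero]

theorem finrank_restrictScalars (hM : IsMaximalClass E M Mc) {F : Type*} [Field F]
    [Algebra F E] [Module F M] [IsScalarTower F E M] (hi : 2 ≤ i) :
    Module.finrank F (restrictScalars F (Mc i)) = Module.finrank F E := by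
  rw [← Module.finrank_mul_finrank F E, (restrictScalarsEquiv F E M (Mc i)).finrank_eq,
    hM.finrank_eq_one i hi, mul_one]

variable {F : Type*} [Field F] [Algebra F E] [LieAlgebra F M] [IsScalarTower F E M] {X Y : M}

theorem eq_zero_of_lie_eq_zero (hM : IsMaximalClass E M Mc) (hX : X ∈ Mc 1) (hY : Y ∈ Mc 1)
    (hi : 2 ≤ i) (hd : dSeq E Mc F X Y i = 0) {u s : M} (hu : u ∈ Mc i) (hu0 : u ≠ 0)
    (hs : s ∈ span F {X, Y}) (h : ⁅u, s⁆ = 0) : s = 0 := by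
  have : FiniteDimensional F (Lcomp F X Y 1) := FiniteDimensional.span_of_finite F (Set.toFinite _)
  have hbot := Submodule.finrank_eq_zero.mp hd
  have hs1 : s ∈ Mc 1 := span_le (p := restrictScalars F (Mc 1)) |>.mpr (Set.pair_subset hX hY) hs
  have hsC : s ∈ restrictScalars F (twoStepCentraliser Mc i) ⊓ Lcomp F X Y 1 :=
    ⟨hM.mem_twoStepCentraliser hi hu hu0 hs1 h, hs⟩
  simpa [hbot] using hsC

theorem exists_lie_eq (hM : IsMaximalClass E M Mc) (hEF : Module.finrank F E = 2)
    (hX : X ∈ Mc 1) (hY : Y ∈ Mc 1) (hXY : LinearIndependent F ![X, Y]) (hi : 2 ≤ i)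
    (hd : dSeq E Mc F X Y i = 0) {u w : M} (hu : u ∈ Mc i) (hu0 : u ≠ 0)
    (hw : w ∈ Mc (i + 1)) : ∃ s ∈ span F {X, Y}, w = ⁅u, s⁆ := by
  have hcomb (a b : F) : a • X + b • Y ∈ span F {X, Y} :=
    add_mem (smul_mem _ a (subset_span (by simp))) (smul_mem _ b (subset_span (by simp)))
  have hind : LinearIndependent F ![⁅u, X⁆, ⁅u, Y⁆] := by
    refine LinearIndependent.pair_iff.mpr fun a b hab => LinearIndependent.pair_iff.mp hXY a b ?_
    refine hM.eq_zero_of_lie_eq_zero hX hY hi hd hu hu0 (hcomb a b) ?_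
    rw [lie_add, lie_smul, lie_smul, hab]
  have hle : span F {⁅u, X⁆, ⁅u, Y⁆} ≤ restrictScalars F (Mc (i + 1)) :=
    span_le.mpr (Set.pair_subset (hM.lie_mem i 1 u hu X hX) (hM.lie_mem i 1 u hu Y hY))
  have hrank : Module.finrank F (restrictScalars F (Mc (i + 1))) = 2 :=
    (hM.finrank_restrictScalars (by omega)).trans hEF
  have : FiniteDimensional F (restrictScalars F (Mc (i + 1))) := .of_finrank_pos (by omega)
  have heq : span F {⁅u, X⁆, ⁅u, Y⁆} = restrictScalars F (Mc (i + 1)) := by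
    refine eq_of_le_of_finrank_le hle ?_
    rw [hrank, ← Matrix.range_cons_cons_empty _ _ ![], finrank_span_eq_card hind, Fintype.card_fin]
  obtain ⟨a, b, rfl⟩ := mem_span_pair.mp (heq ▸ hw : w ∈ span F {⁅u, X⁆, ⁅u, Y⁆})
  exact ⟨a • X + b • Y, hcomb a b, by rw [lie_add, lie_smul, lie_smul]⟩

variable {M3 : Submodule F M} {f : M3 →ₗ[F] M3}

theorem apply_eq_smul_of_mem_succ (hM : IsMaximalClass E M Mc) (hEF : Module.finrank F E = 2)
    (hX : X ∈ Mc 1) (hY : Y ∈ Mc 1) (hXY : LinearIndependent F ![X, Y]) (hi : 2 ≤ i)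
    (hd : dSeq E Mc F X Y i = 0)
    (hf : ∀ (u w : M3) (t : M), t ∈ span F {X, Y} → (w : M) = ⁅(u : M), t⁆ →
      (f w : M) = ⁅(f u : M), t⁆)
    {σ : E} {u : M3} (hu : (u : M) ∈ Mc i) (hu0 : (u : M) ≠ 0) (hfu : (f u : M) = σ • (u : M))
    {w : M3} (hw : (w : M) ∈ Mc (i + 1)) : (f w : M) = σ • (w : M) := by
  obtain ⟨s, hs, hws⟩ := hM.exists_lie_eq hEF hX hY hXY hi hd hu hu0 hw
  rw [hf u w s hs hws, hfu, smul_lie, ← hws]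

theorem apply_eq_smul_of_lt (hM : IsMaximalClass E M Mc) (hEF : Module.finrank F E = 2)
    (hX : X ∈ Mc 1) (hY : Y ∈ Mc 1) (hXY : LinearIndependent F ![X, Y]) (hi : 2 ≤ i)
    (hd : ∀ j, i ≤ j → dSeq E Mc F X Y j = 0) (hmem : ∀ j, i < j → ∀ x ∈ Mc j, x ∈ M3)
    (hf : ∀ (u w : M3) (t : M), t ∈ span F {X, Y} → (w : M) = ⁅(u : M), t⁆ →
      (f w : M) = ⁅(f u : M), t⁆)
    {σ : E} {u : M3} (hu : (u : M) ∈ Mc i) (hu0 : (u : M) ≠ 0) (hfu : (f u : M) = σ • (u : M))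
    {j : ℕ} (hj : i < j) {w : M3} (hw : (w : M) ∈ Mc j) : (f w : M) = σ • (w : M) := by
  induction j, hj using Nat.le_induction generalizing w with
  | base => exact hM.apply_eq_smul_of_mem_succ hEF hX hY hXY hi (hd i le_rfl) hf hu hu0 hfu hw
  | succ j hj ih =>
    obtain ⟨v, hv, hv0⟩ := hM.exists_ne_zero (i := j) (by omega)
    exact hM.apply_eq_smul_of_mem_succ hEF hX hY hXY (by omega) (hd j (by omega)) hf
      (u := ⟨v, hmem j hj v hv⟩) hv hv0 (ih hv) hw

theorem apply_eq_smul_of_forall_mem_succ (hM : IsMaximalClass E M Mc) (hX : X ∈ Mc 1)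
    (hX0 : X ≠ 0) (hY : Y ∈ Mc 1) (hi : 2 ≤ i) (hd : dSeq E Mc F X Y i = 0)
    (hf : ∀ (u w : M3) (t : M), t ∈ span F {X, Y} → (w : M) = ⁅(u : M), t⁆ →
      (f w : M) = ⁅(f u : M), t⁆)
    {σ : E} (hsucc : ∀ w : M3, (w : M) ∈ Mc (i + 1) → (f w : M) = σ • (w : M))
    {v : M3} (hv : (v : M) ∈ Mc i) (hfv : (f v : M) ∈ Mc i) (hvX : ⁅(v : M), X⁆ ∈ M3) :
    (f v : M) = σ • (v : M) := by
  have hXspan : X ∈ span F {X, Y} := subset_span (by simp)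
  have hlie : ⁅(f v : M) - σ • (v : M), X⁆ = 0 := by
    rw [sub_lie, smul_lie, ← hf v ⟨_, hvX⟩ X hXspan rfl,
      hsucc ⟨_, hvX⟩ (hM.lie_mem i 1 _ hv X hX), sub_self]
  by_contra hne
  exact hX0 <| hM.eq_zero_of_lie_eq_zero hX hY hi hd (sub_mem hfv (smul_mem _ σ hv))
    (sub_ne_zero.mpr hne) hXspan hlie

end IsMaximalClass

/-- assume `[E : F] = 2` and `d_i = 0` for every `i ≥ 2` (so `L` is thin).
Let `M³ = ⊕_{i ≥ 3} M_i` and let `f : M³ → M³` be an `F`-linear map preserving each `M_i`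
(`i ≥ 3`) and commuting with the adjoint action of `L`.  Then `f` is multiplication by
some scalar `σ ∈ E`. -/
theorem stmt_10 (E : Type*) [Field E] (M : Type*) [LieRing M] [LieAlgebra E M]
    (Mc : ℕ → Submodule E M) (hM : IsMaximalClass E M Mc)
    (F : Type*) [Field F] [Algebra F E] [LieAlgebra F M] [IsScalarTower F E M]
    (hEF : Module.finrank F E = 2)
    (X Y : M) (hX : X ∈ Mc 1) (hY : Y ∈ Mc 1) (hXY : LinearIndependent E ![X, Y])
    (hd : ∀ i : ℕ, 2 ≤ i → dSeq E Mc F X Y i = 0)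
    (M3 : Submodule F M)
    (hM3 : M3 = ⨆ i : ℕ, ⨆ _ : 3 ≤ i, Submodule.restrictScalars F (Mc i))
    (f : ↥M3 →ₗ[F] ↥M3)
    (hf1 : ∀ i : ℕ, 3 ≤ i → ∀ u : ↥M3, (u : M) ∈ Mc i → ((f u : M) ∈ Mc i))
    (hf2 : ∀ (u w : ↥M3) (t : M), t ∈ LieSubalgebra.lieSpan F M {X, Y} →
      (w : M) = ⁅(u : M), t⁆ → (f w : M) = ⁅(f u : M), t⁆) :
    ∃ σ : E, ∀ u : ↥M3, (f u : M) = σ • (u : M) := by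
  have hXYF : LinearIndependent F ![X, Y] := hXY.restrict_scalars' F
  have hX0 : X ≠ 0 := by simpa using hXYF.ne_zero 0
  have hf : ∀ (u w : M3) (t : M), t ∈ span F {X, Y} → (w : M) = ⁅(u : M), t⁆ →
      (f w : M) = ⁅(f u : M), t⁆ :=
    fun u w t ht => hf2 u w t (LieSubalgebra.submodule_span_le_lieSpan ht)
  have hmem : ∀ i, 3 ≤ i → ∀ x ∈ Mc i, x ∈ M3 := fun i hi x hx =>
    hM3 ▸ mem_iSup_of_mem i (mem_iSup_of_mem hi hx)
  obtain ⟨u, hu, hu0⟩ := hM.exists_ne_zero (i := 3) (by norm_num)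
  obtain ⟨σ, hσ⟩ := hM.exists_eq_smul (by norm_num) hu hu0
    (hf1 3 le_rfl ⟨u, hmem 3 le_rfl u hu⟩ hu)
  have hgt : ∀ j, 3 < j → ∀ w : M3, (w : M) ∈ Mc j → (f w : M) = σ • (w : M) :=
    fun j hj w hw => hM.apply_eq_smul_of_lt hEF hX hY hXYF (by norm_num)
      (fun j hj => hd j (by omega)) (fun j hj => hmem j hj.le) hf
      (u := ⟨u, hmem 3 le_rfl u hu⟩) hu hu0 hσ hj hw
  refine ⟨σ, apply_eq_smul_of_eq_iSup (hM3.trans iSup_subtype') f σ ?_⟩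
  rintro ⟨j, hj⟩ w hw
  obtain rfl | hj := hj.eq_or_lt
  · exact hM.apply_eq_smul_of_forall_mem_succ hX hX0 hY (by norm_num) (hd 3 (by norm_num)) hf
      (hgt 4 (by norm_num)) hw (hf1 3 le_rfl w hw)
      (hmem 4 (by norm_num) _ (hM.lie_mem 3 1 _ hw X hX))
  · exact hgt j hj w hw
end

section
/- Assume [E : F] = 2 and that the sequence (d_i)_{i ≥ 2} is not constant, where d_i = dim_F(C_i ∩ L_1). Let t₁ be the least i ≥ 2 with d_i = 0. Then dim_F L_i = 1 for every i with 2 ≤ i ≤ t₁, and dim_F L_i = 2 for every i > t₁. -/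
open Submodule

section Aux
variable {E : Type*} [Field E] {M : Type*} [LieRing M] [LieAlgebra E M]

lemma aux_span_singleton_of_finrank_one {p : Submodule E M} (hp : Module.finrank E ↥p = 1)
    {w : M} (hw : w ∈ p) (hw0 : w ≠ 0) : p = Submodule.span E {w} := by
  haveI : FiniteDimensional E ↥p := Module.finite_of_finrank_eq_succ hp
  refine (Submodule.eq_of_le_of_finrank_le ((Submodule.span_le).2 (by simpa using hw)) ?_).symm
  rw [hp, finrank_span_singleton hw0]

lemma aux_exists_gen {p : Submodule E M} (hp : Module.finrank E ↥p = 1) :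
    ∃ w, w ∈ p ∧ w ≠ 0 ∧ p = Submodule.span E {w} := by
  have hb : p ≠ ⊥ := by rintro rfl; rw [finrank_bot] at hp; omega
  obtain ⟨w, hw, hw0⟩ := (Submodule.ne_bot_iff p).1 hb
  exact ⟨w, hw, hw0, aux_span_singleton_of_finrank_one hp hw hw0⟩

lemma aux_lie_mem_span_pair {R : Type*} [CommRing R] {N : Type*} [LieRing N] [LieAlgebra R N]
    {X Y v a : N} (hv : v ∈ span R {X, Y}) (ha : a ∈ span R {X, Y}) :
    ⁅v, a⁆ ∈ span R ({⁅X, Y⁆} : Set N) := by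
  obtain ⟨p, q, rfl⟩ := mem_span_pair.1 hv
  obtain ⟨r, s, rfl⟩ := mem_span_pair.1 ha
  rw [mem_span_singleton]
  refine ⟨p*s - q*r, ?_⟩
  have h : ⁅Y, X⁆ = -⁅X, Y⁆ := (lie_skew Y X).symm
  simp only [add_lie, lie_add, smul_lie, lie_smul, lie_self, smul_zero, add_zero, zero_add,
    smul_smul, h, smul_neg, sub_smul, mul_comm]
  abel

lemma aux_lie_span_w {R : Type*} [CommRing R] {N : Type*} [LieRing N] [LieAlgebra R N]
    {w X Y v a : N} (hv : v ∈ span R ({w} : Set N)) (ha : a ∈ span R {X, Y}) :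
    ⁅v, a⁆ ∈ span R ({⁅w, X⁆, ⁅w, Y⁆} : Set N) := by
  obtain ⟨s, rfl⟩ := mem_span_singleton.1 hv
  obtain ⟨p, q, rfl⟩ := mem_span_pair.1 ha
  rw [mem_span_pair]
  exact ⟨s*p, s*q, by simp only [lie_add, lie_smul, smul_lie, smul_smul]; ring_nf⟩

lemma aux_range_pair {V : Type*} (x y : V) : Set.range ![x, y] = {x, y} := by
  ext z
  simp [Fin.exists_fin_two, or_comm]

lemma aux_finrank_span_pair {K V : Type*} [Field K] [AddCommGroup V] [Module K V]
    {x y : V} (h : LinearIndependent K ![x, y]) :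
    Module.finrank K ↥(span K ({x, y} : Set V)) = 2 := by
  have := finrank_span_eq_card h
  rwa [aux_range_pair, Fintype.card_fin] at this

end Aux

/-- assume `[E : F] = 2` and the sequence `(d_i)_{i ≥ 2}` is not constant.
If `t₁` is the least `i ≥ 2` with `d_i = 0`, then `dim_F L_i = 1` for `2 ≤ i ≤ t₁` and
`dim_F L_i = 2` for `i > t₁`. -/
theorem stmt_11 (E : Type*) [Field E] (M : Type*) [LieRing M] [LieAlgebra E M]
    (Mc : ℕ → Submodule E M) (hM : IsMaximalClass E M Mc)
    (F : Type*) [Field F] [Algebra F E] [LieAlgebra F M] [IsScalarTower F E M]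
    (hEF : Module.finrank F E = 2)
    (X Y : M) (hX : X ∈ Mc 1) (hY : Y ∈ Mc 1) (hXY : LinearIndependent E ![X, Y])
    (hnc : ∃ i j : ℕ, 2 ≤ i ∧ 2 ≤ j ∧ dSeq E Mc F X Y i ≠ dSeq E Mc F X Y j)
    (t₁ : ℕ) (ht₁ : 2 ≤ t₁) (ht₁0 : dSeq E Mc F X Y t₁ = 0)
    (ht₁min : ∀ i : ℕ, 2 ≤ i → dSeq E Mc F X Y i = 0 → t₁ ≤ i) :
    (∀ i : ℕ, 2 ≤ i → i ≤ t₁ → Module.finrank F ↥(Lcomp F X Y i) = 1) ∧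
    (∀ i : ℕ, t₁ < i → Module.finrank F ↥(Lcomp F X Y i) = 2) := by
  -- basic equations
  have hL1 : Lcomp F X Y 1 = span F {X, Y} := rfl
  have hLsucc : ∀ i : ℕ, Lcomp F X Y (i + 2) = Submodule.span F
      {z : M | ∃ v ∈ Lcomp F X Y (i + 1), ∃ a ∈ Submodule.span F ({X, Y} : Set M), z = ⁅v, a⁆} :=
    fun i => rfl
  -- Mc 1 = span E {X, Y}
  have hMc1 : Mc 1 = span E {X, Y} := by
    haveI : FiniteDimensional E ↥(Mc 1) := Module.finite_of_finrank_eq_succ hM.finrank_one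
    refine (Submodule.eq_of_le_of_finrank_le ((span_le).2 ?_) ?_).symm
    · rintro z (rfl | rfl) <;> assumption
    · rw [hM.finrank_one, aux_finrank_span_pair hXY]
  -- Lemma A
  have hA : ∀ i : ℕ, 1 ≤ i → ∀ w : M, Mc i = span E {w} →
      Mc (i + 1) = span E {⁅w, X⁆, ⁅w, Y⁆} := by
    intro i hi w hw
    have hwMc : w ∈ Mc i := hw ▸ mem_span_singleton_self w
    apply le_antisymm
    · rw [hM.span_succ i hi]
      refine span_le.2 ?_
      rintro z ⟨v, hv, a, ha, rfl⟩
      rw [hw] at hv; rw [hMc1] at ha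
      exact aux_lie_span_w hv ha
    · refine span_le.2 ?_
      rintro z (rfl | rfl)
      · exact hM.lie_mem i 1 w hwMc X hX
      · exact hM.lie_mem i 1 w hwMc Y hY
  -- Lcomp step from a singleton span
  have hLstep : ∀ k : ℕ, 1 ≤ k → ∀ w : M, Lcomp F X Y k = span F {w} →
      Lcomp F X Y (k + 1) = span F {⁅w, X⁆, ⁅w, Y⁆} := by
    intro k hk w hw
    obtain ⟨m, rfl⟩ : ∃ m, k = m + 1 := ⟨k - 1, by omega⟩
    rw [hLsucc]
    apply le_antisymm
    · refine span_le.2 ?_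
      rintro z ⟨v, hv, a, ha, rfl⟩
      rw [hw] at hv
      exact aux_lie_span_w hv ha
    · refine span_le.2 ?_
      have hwL : w ∈ Lcomp F X Y (m + 1) := hw ▸ mem_span_singleton_self w
      rintro z (rfl | rfl)
      · exact subset_span ⟨w, hwL, X, subset_span (by simp), rfl⟩
      · exact subset_span ⟨w, hwL, Y, subset_span (by simp), rfl⟩
  -- F-linear independence of X, Y
  have hXYF : ∀ α β : F, α • X + β • Y = 0 → α = 0 ∧ β = 0 := by
    intro α β h
    have h' : (algebraMap F E α) • X + (algebraMap F E β) • Y = 0 := by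
      rw [algebraMap_smul, algebraMap_smul]; exact h
    obtain ⟨h1, h2⟩ := LinearIndependent.pair_iff.1 hXY _ _ h'
    constructor
    · exact (algebraMap F E).injective (by rw [h1, map_zero])
    · exact (algebraMap F E).injective (by rw [h2, map_zero])
  -- membership of F-combinations in Mc 1
  have hcomb : ∀ α β : F, α • X + β • Y ∈ Mc 1 := by
    intro α β
    rw [← algebraMap_smul E α X, ← algebraMap_smul E β Y]
    exact add_mem (Submodule.smul_mem _ _ hX) (Submodule.smul_mem _ _ hY)
  -- nonzero centraliser element from d ≠ 0
  have hdne : ∀ i : ℕ, dSeq E Mc F X Y i ≠ 0 →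
      ∃ c : M, c ≠ 0 ∧ c ∈ twoStepCentraliser Mc i ∧ c ∈ Lcomp F X Y 1 := by
    intro i hd
    have hb : (Submodule.restrictScalars F (twoStepCentraliser Mc i) ⊓ Lcomp F X Y 1) ≠ ⊥ := by
      intro h
      apply hd
      unfold dSeq
      rw [h, finrank_bot]
    obtain ⟨c, hc, hc0⟩ := (Submodule.ne_bot_iff _).1 hb
    obtain ⟨hc1, hc2⟩ := Submodule.mem_inf.1 hc
    exact ⟨c, hc0, hc1, hc2⟩
  -- d_{t₁} = 0 gives independence condition
  haveI : FiniteDimensional F ↥(Lcomp F X Y 1) := by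
    rw [hL1]; exact FiniteDimensional.span_of_finite F (Set.toFinite _)
  have hd0 : ∀ c : M, c ∈ twoStepCentraliser Mc t₁ → c ∈ Lcomp F X Y 1 → c = 0 := by
    intro c hc1 hc2
    by_contra hc0
    haveI : FiniteDimensional F
        ↥(Submodule.restrictScalars F (twoStepCentraliser Mc t₁) ⊓ Lcomp F X Y 1) :=
      Submodule.finiteDimensional_of_le inf_le_right
    have hb := Submodule.finrank_eq_zero.1 ht₁0
    rw [Submodule.eq_bot_iff] at hb
    exact hc0 (hb c (Submodule.mem_inf.2 ⟨hc1, hc2⟩))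
  -- finrank over F of restricted Mc i
  haveI hFE : FiniteDimensional F E := Module.finite_of_finrank_eq_succ hEF
  have hfr2 : ∀ i : ℕ, 2 ≤ i →
      Module.finrank F ↥(Submodule.restrictScalars F (Mc i)) = 2 := by
    intro i hi
    haveI : FiniteDimensional E ↥(Mc i) :=
      Module.finite_of_finrank_eq_succ (hM.finrank_eq_one i hi)
    calc Module.finrank F ↥(Submodule.restrictScalars F (Mc i))
        = Module.finrank F ↥(Mc i) :=
          (((Submodule.restrictScalarsEquiv F E M (Mc i)).restrictScalars F)).finrank_eq
      _ = 2 := by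
          rw [← Module.finrank_mul_finrank F E ↥(Mc i), hEF, hM.finrank_eq_one i hi]
  -- L_i ⊆ Mc i
  have hLM : ∀ i : ℕ, Lcomp F X Y (i + 1) ≤ Submodule.restrictScalars F (Mc (i + 1)) := by
    intro i
    induction i with
    | zero =>
      rw [hL1]
      refine span_le.2 ?_
      rintro z (rfl | rfl) <;> simpa
    | succ n ih =>
      rw [hLsucc]
      refine span_le.2 ?_
      rintro z ⟨v, hv, a, ha, rfl⟩
      have hv' : v ∈ Mc (n + 1) := ih hv
      have ha' : a ∈ Mc 1 := by
        obtain ⟨p, q, rfl⟩ := mem_span_pair.1 ha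
        exact hcomb p q
      simpa using hM.lie_mem (n + 1) 1 v hv' a ha'
  -- key induction below t₁
  have key1 : ∀ k : ℕ, 2 ≤ k → k ≤ t₁ →
      ∃ w : M, w ∈ Mc k ∧ w ≠ 0 ∧ Lcomp F X Y k = span F {w} := by
    intro k hk
    induction k, hk using Nat.le_induction with
    | base =>
      intro _
      -- k = 2
      refine ⟨⁅X, Y⁆, hM.lie_mem 1 1 X hX Y hY, ?_, ?_⟩
      · intro h0
        have hMc2 : Mc 2 ≤ span E ({⁅X, Y⁆} : Set M) := by
          rw [hM.span_succ 1 le_rfl]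
          refine span_le.2 ?_
          rintro z ⟨v, hv, a, ha, rfl⟩
          rw [hMc1] at hv ha
          exact aux_lie_mem_span_pair hv ha
        rw [h0] at hMc2
        have hbot : Mc 2 = ⊥ := le_bot_iff.1 (by simpa using hMc2)
        have := hM.finrank_eq_one 2 le_rfl
        rw [hbot, finrank_bot] at this
        omega
      · rw [hLsucc 0, hL1]
        apply le_antisymm
        · refine span_le.2 ?_
          rintro z ⟨v, hv, a, ha, rfl⟩
          exact aux_lie_mem_span_pair hv ha
        · refine span_le.2 ?_
          rintro z rfl
          exact subset_span ⟨X, subset_span (by simp), Y, subset_span (by simp), rfl⟩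
    | succ k hk ih =>
      intro hk1
      obtain ⟨w, hwM, hw0, hLk⟩ := ih (by omega)
      have hMk : Mc k = span E {w} :=
        aux_span_singleton_of_finrank_one (hM.finrank_eq_one k hk) hwM hw0
      have hMk1 : Mc (k + 1) = span E {⁅w, X⁆, ⁅w, Y⁆} := hA k (by omega) w hMk
      have hLk1 : Lcomp F X Y (k + 1) = span F {⁅w, X⁆, ⁅w, Y⁆} :=
        hLstep k (by omega) w hLk
      -- d_k ≠ 0
      have hdk : dSeq E Mc F X Y k ≠ 0 := fun h => by
        have := ht₁min k hk h
        omega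
      obtain ⟨c, hc0, hcC, hcL⟩ := hdne k hdk
      obtain ⟨α, β, rfl⟩ := mem_span_pair.1 (hL1 ▸ hcL)
      have hwc : ⁅w, α • X + β • Y⁆ = 0 := by
        rw [← neg_eq_zero, lie_skew]
        exact hcC.2 w hwM
      have hrel : α • ⁅w, X⁆ + β • ⁅w, Y⁆ = 0 := by
        rw [← lie_smul, ← lie_smul, ← lie_add]
        exact hwc
      -- not both brackets zero
      have hnb : ¬ (⁅w, X⁆ = (0 : M) ∧ ⁅w, Y⁆ = (0 : M)) := by
        rintro ⟨h1, h2⟩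
        rw [h1, h2] at hMk1
        have : Mc (k + 1) = ⊥ := by
          rw [hMk1]
          simp
        have h := hM.finrank_eq_one (k + 1) (by omega)
        rw [this, finrank_bot] at h
        omega
      by_cases hβ : β = 0
      · -- then α ≠ 0, ⁅w,X⁆ = 0, generator is ⁅w,Y⁆
        have hα : α ≠ 0 := by
          rintro rfl
          rw [hβ] at hc0
          simp at hc0
        have h1 : ⁅w, X⁆ = 0 := by
          rw [hβ, zero_smul, add_zero] at hrel
          exact (smul_eq_zero.1 hrel).resolve_left hα
        have h2 : ⁅w, Y⁆ ≠ 0 := fun h => hnb ⟨h1, h⟩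
        refine ⟨⁅w, Y⁆, hA k (by omega) w hMk ▸ subset_span (by simp), h2, ?_⟩
        rw [hLk1, h1]
        rw [Submodule.span_insert_eq_span]
        exact zero_mem _
      · -- β ≠ 0: ⁅w,Y⁆ ∈ span {⁅w,X⁆}
        have hb : β • ⁅w, Y⁆ = -(α • ⁅w, X⁆) := by
          rw [eq_neg_iff_add_eq_zero, add_comm]
          exact hrel
        have h2 : ⁅w, Y⁆ = (β⁻¹ * -α) • ⁅w, X⁆ := by
          rw [mul_smul, neg_smul, ← hb, inv_smul_smul₀ hβ]
        have h1 : ⁅w, X⁆ ≠ 0 := by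
          intro h
          refine hnb ⟨h, ?_⟩
          rw [h2, h, smul_zero]
        refine ⟨⁅w, X⁆, hMk1 ▸ subset_span (by simp), h1, ?_⟩
        rw [hLk1, Set.pair_comm,
          Submodule.span_insert_eq_span (mem_span_singleton.2 ⟨β⁻¹ * -α, h2.symm⟩)]
  -- L_i = Mc i (over F) for i > t₁
  have key2 : ∀ k : ℕ, t₁ + 1 ≤ k → Lcomp F X Y k = Submodule.restrictScalars F (Mc k) := by
    intro k hk
    induction k, hk using Nat.le_induction with
    | base =>
      obtain ⟨w, hwM, hw0, hLt⟩ := key1 t₁ ht₁ le_rfl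
      have hMt : Mc t₁ = span E {w} :=
        aux_span_singleton_of_finrank_one (hM.finrank_eq_one t₁ ht₁) hwM hw0
      have hMt1 : Mc (t₁ + 1) = span E {⁅w, X⁆, ⁅w, Y⁆} := hA t₁ (by omega) w hMt
      have hLt1 : Lcomp F X Y (t₁ + 1) = span F {⁅w, X⁆, ⁅w, Y⁆} := hLstep t₁ (by omega) w hLt
      have hind : LinearIndependent F ![⁅w, X⁆, ⁅w, Y⁆] := by
        rw [LinearIndependent.pair_iff]
        intro α β hrel
        by_contra hne
        have hc0 : α • X + β • Y ≠ 0 := by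
          intro h
          obtain ⟨h1, h2⟩ := hXYF α β h
          exact hne ⟨h1, h2⟩
        have hwc : ⁅w, α • X + β • Y⁆ = 0 := by
          rw [lie_add, lie_smul, lie_smul]
          exact hrel
        have hcw : ⁅α • X + β • Y, w⁆ = 0 := by
          rw [← neg_eq_zero, lie_skew, hwc]
        have hcC : (α • X + β • Y) ∈ twoStepCentraliser Mc t₁ := by
          refine ⟨hcomb α β, ?_⟩
          intro u hu
          rw [hMt] at hu
          obtain ⟨e, rfl⟩ := mem_span_singleton.1 hu
          rw [lie_smul, hcw, smul_zero]
        have hcL : (α • X + β • Y) ∈ Lcomp F X Y 1 := by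
          rw [hL1]
          exact mem_span_pair.2 ⟨α, β, rfl⟩
        exact hc0 (hd0 _ hcC hcL)
      haveI : FiniteDimensional F ↥(Submodule.restrictScalars F (Mc (t₁ + 1))) :=
        Module.finite_of_finrank_eq_succ (hfr2 (t₁ + 1) (by omega))
      refine Submodule.eq_of_le_of_finrank_le ?_ ?_
      · exact hLM t₁
      · rw [hfr2 (t₁ + 1) (by omega), hLt1, aux_finrank_span_pair hind]
    | succ k hk ih =>
      have hk2 : 2 ≤ k := by omega
      obtain ⟨w, hwM, hw0, hMk⟩ := aux_exists_gen (hM.finrank_eq_one k hk2)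
      have hMk1 : Mc (k + 1) = span E {⁅w, X⁆, ⁅w, Y⁆} := hA k (by omega) w hMk
      obtain ⟨m, rfl⟩ : ∃ m, k = m + 1 := ⟨k - 1, by omega⟩
      apply le_antisymm (hLM (m + 1))
      intro z hz
      have hz' : z ∈ Mc (m + 1 + 1) := hz
      rw [hMk1] at hz'
      obtain ⟨e1, e2, rfl⟩ := mem_span_pair.1 hz'
      rw [hLsucc]
      have hmem : ∀ e : E, ∀ a : M, a ∈ ({X, Y} : Set M) → e • ⁅w, a⁆ ∈ span F
          {z : M | ∃ v ∈ Lcomp F X Y (m + 1), ∃ a ∈ span F ({X, Y} : Set M), z = ⁅v, a⁆} := by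
        intro e a haXY
        rw [← smul_lie]
        refine subset_span ⟨e • w, ?_, a, subset_span haXY, rfl⟩
        rw [ih, Submodule.restrictScalars_mem]
        exact Submodule.smul_mem _ e hwM
      exact add_mem (hmem e1 X (by simp)) (hmem e2 Y (by simp))
  refine ⟨?_, ?_⟩
  · intro i h2 hle
    obtain ⟨w, _, hw0, hLi⟩ := key1 i h2 hle
    rw [hLi, finrank_span_singleton hw0]
  · intro i hlt
    rw [key2 i (by omega)]
    exact hfr2 i (by omega)
end

section
/- Every nonzero L-module endomorphism φ of V (an F-linear map φ : V → V with φ(v · x) = φ(v) · x for all v ∈ V and x ∈ L) is injective. -/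
open Submodule

/-- `L` is a Lie algebra graded over the positive integers and generated by `L_1`. -/
structure IsGradedLieAlgebra (F : Type*) [Field F] (L : Type*) [LieRing L] [LieAlgebra F L]
    (Lc : ℕ → Submodule F L) : Prop where
  zero_bot : Lc 0 = ⊥
  internal : DirectSum.IsInternal Lc
  lie_mem : ∀ i j : ℕ, ∀ x ∈ Lc i, ∀ y ∈ Lc j, ⁅x, y⁆ ∈ Lc (i + j)
  gen : LieSubalgebra.lieSpan F L (Lc 1 : Set L) = ⊤

/-- `V = ⊕_{i ≥ n₀} V_i` is a graded `L`-module. -/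
structure IsGradedLieModule (F : Type*) [Field F] (L : Type*) [LieRing L] [LieAlgebra F L]
    (Lc : ℕ → Submodule F L)
    (V : Type*) [AddCommGroup V] [Module F V] [LieRingModule L V] [LieModule F L V]
    (Vc : ℤ → Submodule F V) (n₀ : ℤ) : Prop where
  bot_of_lt : ∀ i : ℤ, i < n₀ → Vc i = ⊥
  internal : DirectSum.IsInternal Vc
  lie_mem : ∀ (i : ℤ) (j : ℕ), ∀ x ∈ Lc j, ∀ v ∈ Vc i, ⁅x, v⁆ ∈ Vc (i + j)

/-- `V` is just infinite-dimensional (in the strong sense): `V` is infinite-dimensional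
over `F` and every nonzero `L`-submodule of `V` has finite codimension in `V`. -/
def IsJustInfiniteModule (F : Type*) [Field F] (L : Type*) [LieRing L] [LieAlgebra F L]
    (V : Type*) [AddCommGroup V] [Module F V] [LieRingModule L V] [LieModule F L V] : Prop :=
  ¬ Module.Finite F V ∧
    ∀ W : LieSubmodule F L V, W ≠ ⊥ → Module.Finite F (V ⧸ (W : Submodule F V))

/-- The space `grend_{L,d}(V)` of graded `L`-endomorphisms of `V` of degree `d`. -/
def grend (F : Type*) [Field F] (L : Type*) [LieRing L] [LieAlgebra F L]
    (V : Type*) [AddCommGroup V] [Module F V] [LieRingModule L V] [LieModule F L V]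
    (Vc : ℤ → Submodule F V) (d : ℕ) : Submodule F (V →ₗ[F] V) where
  carrier := {φ : V →ₗ[F] V |
    (∀ i : ℤ, ∀ v ∈ Vc i, φ v ∈ Vc (i + d)) ∧ ∀ (x : L) (v : V), φ ⁅x, v⁆ = ⁅x, φ v⁆}
  add_mem' := by
    rintro φ ψ ⟨hφ1, hφ2⟩ ⟨hψ1, hψ2⟩
    refine ⟨fun i v hv => ?_, fun x v => ?_⟩
    · simpa using add_mem (hφ1 i v hv) (hψ1 i v hv)
    · simp [hφ2 x v, hψ2 x v]
  zero_mem' := ⟨fun i v hv => by simp, fun x v => by simp⟩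
  smul_mem' := by
    rintro c φ ⟨hφ1, hφ2⟩
    refine ⟨fun i v hv => ?_, fun x v => ?_⟩
    · simpa using Submodule.smul_mem _ c (hφ1 i v hv)
    · simp [hφ2 x v, lie_smul]

/-- Schur's lemma: every nonzero `L`-module endomorphism of `V`
is injective. -/
theorem stmt_14 (F : Type*) [Field F] (L : Type*) [LieRing L] [LieAlgebra F L]
    (Lc : ℕ → Submodule F L) (hL : IsGradedLieAlgebra F L Lc)
    (V : Type*) [AddCommGroup V] [Module F V] [LieRingModule L V] [LieModule F L V]
    (Vc : ℤ → Submodule F V) (n₀ : ℤ) (hV : IsGradedLieModule F L Lc V Vc n₀)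
    (hJI : IsJustInfiniteModule F L V)
    (φ : V →ₗ[F] V) (hφ : ∀ (x : L) (v : V), φ ⁅x, v⁆ = ⁅x, φ v⁆) (hφ0 : φ ≠ 0) :
    Function.Injective φ := by
  by_contra hinj
  -- kernel as a Lie submodule
  set K : LieSubmodule F L V :=
    { LinearMap.ker φ with
      lie_mem := fun {x m} hm => by
        have hm' : φ m = 0 := hm
        show φ ⁅x, m⁆ = 0
        rw [hφ, hm', lie_zero] } with hK
  -- range as a Lie submodule
  set R : LieSubmodule F L V :=
    { LinearMap.range φ with
      lie_mem := fun {x m} hm => by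
        obtain ⟨v, rfl⟩ := (LinearMap.mem_range).mp hm
        show ⁅x, φ v⁆ ∈ LinearMap.range φ
        exact ⟨⁅x, v⁆, hφ x v⟩ } with hR
  have hKne : K ≠ ⊥ := by
    intro h
    apply hinj
    rw [← LinearMap.ker_eq_bot]
    have : (K : Submodule F V) = ⊥ := by rw [h]; rfl
    exact this
  have hRne : R ≠ ⊥ := by
    intro h
    apply hφ0
    rw [← LinearMap.range_eq_bot]
    have : (R : Submodule F V) = ⊥ := by rw [h]; rfl
    exact this
  have hQK : Module.Finite F (V ⧸ (K : Submodule F V)) := hJI.2 K hKne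
  have hQR : Module.Finite F (V ⧸ (R : Submodule F V)) := hJI.2 R hRne
  -- range is finite-dimensional since it's isomorphic to V ⧸ ker φ
  have hKer : (K : Submodule F V) = LinearMap.ker φ := rfl
  have hRange : (R : Submodule F V) = LinearMap.range φ := rfl
  have hRfin : Module.Finite F (R : Submodule F V) := by
    rw [hRange]
    rw [hKer] at hQK
    exact Module.Finite.equiv (φ.quotKerEquivRange)
  -- conclude V is finite-dimensional, contradiction
  have : IsNoetherian F V := by
    rw [isNoetherian_iff_submodule_quotient (R : Submodule F V)]
    constructor
    · exact (IsNoetherian.iff_fg).mpr hRfin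
    · exact (IsNoetherian.iff_fg).mpr hQR
  exact hJI.1 ((IsNoetherian.iff_fg).mp this)
end

section
/- Let d ≥ 0, let i ≥ n₀ and let v be a nonzero element of V_i. Then the evaluation map grend_{L,d}(V) → V_{i+d} sending φ to φ(v) is an injective F-linear map; consequently dim_F grend_{L,d}(V) ≤ dim_F V_{i+d} for every i ≥ n₀ with V_i ≠ 0. -/
open Submodule

lemma grend_eq_zero_of_eval_eq_zero (F : Type*) [Field F] (L : Type*) [LieRing L]
    [LieAlgebra F L]
    (V : Type*) [AddCommGroup V] [Module F V] [LieRingModule L V] [LieModule F L V]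
    (Vc : ℤ → Submodule F V) (hJI : IsJustInfiniteModule F L V)
    (d : ℕ) (φ : V →ₗ[F] V) (hφ : φ ∈ grend F L V Vc d)
    (v : V) (hv0 : v ≠ 0) (hφv : φ v = 0) : φ = 0 := by
  obtain ⟨hφ1, hφ2⟩ := hφ
  -- kernel as Lie submodule
  set K : LieSubmodule F L V :=
    { LinearMap.ker φ with
      lie_mem := fun {x m} hm => by
        have hm' : φ m = 0 := hm
        show φ ⁅x, m⁆ = 0
        rw [hφ2 x m, hm', lie_zero] } with hK
  have hKne : K ≠ ⊥ := by
    intro h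
    have : v ∈ K := by simpa [hK, LinearMap.mem_ker] using hφv
    rw [h] at this
    exact hv0 (by simpa using this)
  have hq1 : Module.Finite F (V ⧸ (LinearMap.ker φ)) := hJI.2 K hKne
  by_contra hne
  set R : LieSubmodule F L V :=
    { LinearMap.range φ with
      lie_mem := fun {x m} hm => by
        obtain ⟨w, rfl⟩ := hm
        exact ⟨⁅x, w⁆, hφ2 x w⟩ } with hR
  have hRne : R ≠ ⊥ := by
    intro h
    apply hne
    ext w
    have : φ w ∈ R := ⟨w, rfl⟩
    rw [h] at this
    simpa using this
  have hq2 : Module.Finite F (V ⧸ (LinearMap.range φ)) := hJI.2 R hRne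
  have hr : Module.Finite F (LinearMap.range φ) :=
    Module.Finite.equiv (LinearMap.quotKerEquivRange φ)
  have hrank : Module.rank F V < Cardinal.aleph0 := by
    rw [← rank_quotient_add_rank_of_divisionRing (LinearMap.range φ)]
    exact Cardinal.add_lt_aleph0 (Module.rank_lt_aleph0 F _) (Module.rank_lt_aleph0 F _)
  exact hJI.1 (Module.rank_lt_aleph0_iff.mp hrank)

/-- for `d ≥ 0`, `i ≥ n₀` and `0 ≠ v ∈ V_i`, the evaluation map
`grend_{L,d}(V) → V_{i+d}`, `φ ↦ φ(v)`, is an injective `F`-linear map; consequently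
`dim_F grend_{L,d}(V) ≤ dim_F V_{i+d}` for every `i ≥ n₀` with `V_i ≠ 0`. -/
theorem stmt_15 (F : Type*) [Field F] (L : Type*) [LieRing L] [LieAlgebra F L]
    (Lc : ℕ → Submodule F L) (hL : IsGradedLieAlgebra F L Lc)
    (V : Type*) [AddCommGroup V] [Module F V] [LieRingModule L V] [LieModule F L V]
    (Vc : ℤ → Submodule F V) (n₀ : ℤ) (hV : IsGradedLieModule F L Lc V Vc n₀)
    (hJI : IsJustInfiniteModule F L V)
    (d : ℕ) (i : ℤ) (hi : n₀ ≤ i) (v : V) (hv : v ∈ Vc i) (hv0 : v ≠ 0) :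
    (∀ φ ∈ grend F L V Vc d, φ v ∈ Vc (i + d)) ∧
    (∀ φ ∈ grend F L V Vc d, ∀ ψ ∈ grend F L V Vc d, φ v = ψ v → φ = ψ) ∧
    (∀ i' : ℤ, n₀ ≤ i' → Vc i' ≠ ⊥ →
      Module.rank F ↥(grend F L V Vc d) ≤ Module.rank F ↥(Vc (i' + d))) := by
  
  refine ⟨fun φ hφ => hφ.1 i v hv, fun φ hφ ψ hψ h => ?_, fun i' hi' hne => ?_⟩
  · have := grend_eq_zero_of_eval_eq_zero F L V Vc hJI d (φ - ψ)
      (sub_mem hφ hψ) v hv0 (by simpa [sub_eq_zero] using h)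
    rwa [sub_eq_zero] at this
  · obtain ⟨w, hw, hw0⟩ := (Submodule.ne_bot_iff _).mp hne
    let ev : ↥(grend F L V Vc d) →ₗ[F] ↥(Vc (i' + d)) :=
      { toFun := fun φ => ⟨φ.1 w, φ.2.1 i' w hw⟩
        map_add' := fun φ ψ => by ext; simp
        map_smul' := fun c φ => by ext; simp }
    have hinj : Function.Injective ev := by
      intro φ ψ h
      have h' : φ.1 w = ψ.1 w := congrArg Subtype.val h
      have := grend_eq_zero_of_eval_eq_zero F L V Vc hJI d (φ.1 - ψ.1)
        (sub_mem φ.2 ψ.2) w hw0 (by simpa [sub_eq_zero] using h')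
      exact Subtype.ext (by rwa [sub_eq_zero] at this)
    exact (LinearMap.rank_le_of_injective ev hinj).trans_eq (by simp)
end
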